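/- Let f : ℝ → ℝⁿ be continuous and non-constant. Then for every x ∈ ℝ there exists r_x > 0 such that for all 0 < r < r_x, one has 1/2 ≤ ℋ¹_∞(f(ℝ) ∩ B(f(x),r)) / (2r) ≤ 1. -/

import Mathlib

/-!
The ball `B(f x, r)` alone is a cover of diameter at most `2r`, giving the upper bound.
For the lower bound take `r < dist (f t₀) (f x)` with `f t₀ ≠ f x`: by the intermediate value
theorem every distance in `[0, r)` is `dist (f t) (f x)` for some `f t ∈ B(f x, r)`, and the
1-Lipschitz map `dist · (f x)` sends any countable cover of `f(ℝ) ∩ B(f x, r)` to a cover of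
`[0, r)` whose Lebesgue measure is at most the sum of the diameters.
-/

open ENNReal

/-- 1-dimensional Hausdorff content: infimum over countable covers of the
sum of diameters. -/
noncomputable def hContent {n : ℕ} (F : Set (EuclideanSpace ℝ (Fin n))) : ℝ≥0∞ :=
  ⨅ (U : ℕ → Set (EuclideanSpace ℝ (Fin n))) (_ : F ⊆ ⋃ i, U i),
    ∑' i, EMetric.diam (U i)

open MeasureTheory Metric Set

section HausdorffContent

variable {n : ℕ}

theorem hContent_le_ediam {F U : Set (EuclideanSpace ℝ (Fin n))} (hFU : F ⊆ U) :
    hContent F ≤ ediam U := by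
  have hcover : F ⊆ ⋃ i : ℕ, if i = 0 then U else ∅ :=
    fun z hz => mem_iUnion.2 ⟨0, by simpa using hFU hz⟩
  refine (iInf₂_le (fun i : ℕ => if i = 0 then U else ∅) hcover).trans_eq ?_
  change ∑' i : ℕ, ediam (if i = 0 then U else ∅) = ediam U
  rw [tsum_eq_single 0 fun i hi => by simp [hi]]
  simp

theorem volume_image_le_hContent {g : EuclideanSpace ℝ (Fin n) → ℝ} (hg : LipschitzWith 1 g)
    (F : Set (EuclideanSpace ℝ (Fin n))) : volume (g '' F) ≤ hContent F := by
  refine le_iInf₂ fun U hU => ?_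
  calc volume (g '' F) ≤ volume (⋃ i, g '' U i) := by
        rw [← image_iUnion]; exact measure_mono (image_mono hU)
    _ ≤ ∑' i, volume (g '' U i) := measure_iUnion_le _
    _ ≤ ∑' i, ediam (U i) := ENNReal.tsum_le_tsum fun i =>
        (Real.volume_le_diam _).trans
          (by simpa only [coe_one, one_mul] using hg.ediam_image_le (U i))

end HausdorffContent

theorem Ico_subset_image_dist_range_inter_ball {E : Type*} [PseudoMetricSpace E] {f : ℝ → E}
    (hf : Continuous f) {x t₀ : ℝ} {r : ℝ} (hr : r ≤ dist (f t₀) (f x)) :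
    Ico 0 r ⊆ (dist · (f x)) '' (range f ∩ ball (f x) r) := by
  intro d hd
  have hd' : d ∈ uIcc (dist (f x) (f x)) (dist (f t₀) (f x)) := by
    rw [dist_self, uIcc_of_le dist_nonneg]
    exact ⟨hd.1, hd.2.le.trans hr⟩
  obtain ⟨t, -, ht⟩ := intermediate_value_uIcc
    (hf.dist continuous_const).continuousOn hd'
  exact ⟨f t, ⟨mem_range_self t, by simpa [mem_ball, ht] using hd.2⟩, ht⟩

theorem hContent_ball_ratio_bounds {n : ℕ}
    (f : ℝ → EuclideanSpace ℝ (Fin n)) (hf : Continuous f)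
    (hnc : ∃ x y, f x ≠ f y) :
    ∀ x : ℝ, ∃ rx > 0, ∀ r : ℝ, 0 < r → r < rx →
      ENNReal.ofReal r ≤ hContent (Set.range f ∩ Metric.ball (f x) r) ∧
        hContent (Set.range f ∩ Metric.ball (f x) r) ≤ ENNReal.ofReal (2 * r) := by
  intro x
  obtain ⟨t₀, ht₀⟩ : ∃ t₀, f t₀ ≠ f x := by
    obtain ⟨a, b, hab⟩ := hnc
    by_cases ha : f a = f x
    · exact ⟨b, fun hb => hab (ha.trans hb.symm)⟩
    · exact ⟨a, ha⟩
  refine ⟨dist (f t₀) (f x), dist_pos.2 ht₀, fun r _ hr => ⟨?_, ?_⟩⟩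
  · calc ENNReal.ofReal r = volume (Ico 0 r) := by rw [Real.volume_Ico, sub_zero]
      _ ≤ volume ((dist · (f x)) '' (range f ∩ ball (f x) r)) :=
        measure_mono (Ico_subset_image_dist_range_inter_ball hf hr.le)
      _ ≤ hContent (range f ∩ ball (f x) r) :=
        volume_image_le_hContent (LipschitzWith.dist_left (f x)) _
  · calc hContent (range f ∩ ball (f x) r) ≤ ediam (ball (f x) r) :=
          hContent_le_ediam inter_subset_right
      _ ≤ ENNReal.ofReal (2 * r) :=
        ediam_le_of_forall_dist_le fun y hy z hz => (dist_triangle_right y z (f x)).trans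
          (by linarith [mem_ball.1 hy, mem_ball.1 hz])
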